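/- arXiv:2101.05341 — 2 statements merged into one kernel-verified Lean document; each statement's English description precedes it below -/
import Mathlib

section
/- Let A = (a_{i,j}) be a matrix with a_{i,j} = 1/i² for j ≤ i² and 0 otherwise, and Ψ(i,j) = i - j. Then condition (A2) fails: lim_i Σ_{j: Ψ(i,j) ≥ 0} a_{i,j} = 0, and consequently the family F_A^Ψ = {K ⊆ ℕ² : δ_A^Ψ(ℕ² \ K) = 0} equals the family of all subsets of ℕ² (in particular it is not a filter, since ∅ ∈ F_A^Ψ). -/
/-!
Every row of `A` up to the diagonal carries only `i + 1` entries of size `1 / i²`, so these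
row sums are `(i + 1) / i² → 0`. Since the entries are nonnegative, restricting a row to any
`K ⊆ ℕ²` only shrinks it, and the squeeze theorem gives density `0` for every `K`.
-/

open Filter Finset Classical Topology

lemma tendsto_sum_ite_mem_of_tendsto_sum {a : ℕ → ℕ → ℝ} {s : ℕ → Finset ℕ}
    (ha : ∀ i j, 0 ≤ a i j) (h : Tendsto (fun i => ∑ j ∈ s i, a i j) atTop (𝓝 0))
    (K : Set (ℕ × ℕ)) [DecidablePred (· ∈ K)] :
    Tendsto (fun i => ∑ j ∈ s i, if (i, j) ∈ K then a i j else 0) atTop (𝓝 0) :=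
  squeeze_zero (fun i => sum_nonneg fun j _ => by split_ifs <;> simp [ha])
    (fun i => sum_le_sum fun j _ => by split_ifs <;> simp [ha]) h

lemma tendsto_natCast_add_one_div_sq_atTop :
    Tendsto (fun i : ℕ => ((i : ℝ) + 1) / (i : ℝ) ^ 2) atTop (𝓝 0) := by
  have h_inv : Tendsto (fun i : ℕ => (i : ℝ)⁻¹) atTop (𝓝 0) :=
    tendsto_inv_atTop_zero.comp tendsto_natCast_atTop_atTop
  have h_split : (fun i : ℕ => ((i : ℝ) + 1) / (i : ℝ) ^ 2) =
      fun i : ℕ => (i : ℝ)⁻¹ + (i : ℝ)⁻¹ ^ 2 := by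
    funext i
    rcases eq_or_ne (i : ℝ) 0 with hi | hi
    · simp [hi]
    · field_simp
  rw [h_split]
  simpa using h_inv.add (h_inv.pow 2)

lemma sum_range_succ_eq_of_le_sq {a : ℕ → ℕ → ℝ}
    (ha : ∀ i j, a i j = if j ≤ i ^ 2 then 1 / (i : ℝ) ^ 2 else 0) (i : ℕ) :
    ∑ j ∈ range (i + 1), a i j = ((i : ℝ) + 1) / (i : ℝ) ^ 2 := by
  have h_const : ∀ j ∈ range (i + 1), a i j = 1 / (i : ℝ) ^ 2 := fun j hj => by
    have hj : j ≤ i ^ 2 :=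
      (Nat.lt_succ_iff.mp (mem_range.mp hj)).trans (Nat.le_self_pow two_ne_zero i)
    simp [ha, hj]
  rw [sum_congr rfl h_const, sum_const, card_range, nsmul_eq_mul]
  push_cast
  ring

/-- With `a i j = 1/i²` for `j ≤ i²` (else 0) and `Ψ(i,j) = i - j` (so `Ψ(i,j) ≥ 0`
means `j ≤ i`), condition (A2) fails: the full section sums tend to 0; consequently
every subset of ℕ² lies in `F_A^Ψ` (the family is all of 𝒫(ℕ²)), in particular
`∅ ∈ F_A^Ψ`, so `F_A^Ψ` is not a filter. -/
theorem psiA_family_degenerate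
    (a : ℕ → ℕ → ℝ) (ha : ∀ i j, a i j = if j ≤ i ^ 2 then 1 / (i : ℝ) ^ 2 else 0) :
    Tendsto (fun i => ∑ j ∈ Finset.range (i + 1), a i j) atTop (nhds 0) ∧
      {K : Set (ℕ × ℕ) |
          Tendsto (fun i => ∑ j ∈ Finset.range (i + 1), if (i, j) ∈ Kᶜ then a i j else 0)
            atTop (nhds 0)} = Set.univ ∧
      (∅ : Set (ℕ × ℕ)) ∈ {K : Set (ℕ × ℕ) |
          Tendsto (fun i => ∑ j ∈ Finset.range (i + 1), if (i, j) ∈ Kᶜ then a i j else 0)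
            atTop (nhds 0)} := by
  have h_row : Tendsto (fun i => ∑ j ∈ range (i + 1), a i j) atTop (𝓝 0) := by
    simpa only [sum_range_succ_eq_of_le_sq ha] using tendsto_natCast_add_one_div_sq_atTop
  have h_nonneg : ∀ i j, 0 ≤ a i j := fun i j => by rw [ha]; positivity
  have h_all : ∀ K : Set (ℕ × ℕ), Tendsto
      (fun i => ∑ j ∈ range (i + 1), if (i, j) ∈ Kᶜ then a i j else 0) atTop (𝓝 0) :=
    fun K => tendsto_sum_ite_mem_of_tendsto_sum h_nonneg h_row Kᶜ
  exact ⟨h_row, Set.eq_univ_of_forall h_all, h_all ∅⟩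
end

section
/- Let A = (a_{i,j}) be a summability matrix: a_{i,j} ≥ 0, Σ_{j: Ψ(i,j)≥0} a_{i,j} ≤ 1 for each i, lim_i Σ_{j: Ψ(i,j)≥0} a_{i,j} = B₀ > 0 exists, and lim_i a_{i,j} = 0 for each fixed j. Then there exists a set K ⊆ ℕ² such that neither K ∈ F_A^Ψ nor (ℕ² \ K) ∈ F_A^Ψ. Consequently, every ultrafilter on ℕ² contains a set not lying in F_A^Ψ, so F_A^Ψ is never an ultrafilter. -/
open Filter Classical

/-- The `i`-th section sum of `K ⊆ ℕ²` with respect to the matrix `a` and the function `Ψ`. -/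
noncomputable def psiASum (a : ℕ → ℕ → ℝ) (Ψ : ℕ × ℕ → ℝ) (K : Set (ℕ × ℕ)) (i : ℕ) : ℝ :=
  ∑' j : ℕ, if (i, j) ∈ K ∧ 0 ≤ Ψ (i, j) then a i j else 0

/-!
A set of whole rows `K = {(i, j) | p i}` has, on every row `i` with `p i`, section sum equal to
the full row sum, which tends to `B₀ > 0`. So if `p` holds for infinitely many `i`, the section
sums of `K` cannot tend to `0`. Taking `p = Even`, this applies both to `K` and to its
complement, the set of odd rows; and every ultrafilter contains one of the two.
-/

open Topology

section RowSets

variable (a : ℕ → ℕ → ℝ) (Ψ : ℕ × ℕ → ℝ) {p : ℕ → Prop}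

theorem psiASum_setOf_fst_of_pos {i : ℕ} (hi : p i) :
    psiASum a Ψ {x | p x.1} i = ∑' j : ℕ, if 0 ≤ Ψ (i, j) then a i j else 0 := by
  simp only [psiASum, Set.mem_ofPred_eq, hi, true_and]

theorem not_tendsto_psiASum_setOf_fst {B₀ : ℝ} (hB₀ : B₀ ≠ 0)
    (hA2 : Tendsto (fun i => ∑' j : ℕ, if 0 ≤ Ψ (i, j) then a i j else 0) atTop (𝓝 B₀))
    (hp : ∃ᶠ i in atTop, p i) :
    ¬ Tendsto (psiASum a Ψ {x | p x.1}) atTop (𝓝 0) := fun h =>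
  hB₀ <| tendsto_nhds_unique_of_frequently_eq hA2 h <|
    hp.mono fun _ hi => (psiASum_setOf_fst_of_pos a Ψ hi).symm

end RowSets

theorem psiA_filter_not_ultrafilter_general (a : ℕ → ℕ → ℝ) (Ψ : ℕ × ℕ → ℝ)
    (B₀ : ℝ) (hB₀ : 0 < B₀)
    (hA2 : Tendsto (fun i => ∑' j : ℕ, if 0 ≤ Ψ (i, j) then a i j else 0) atTop (nhds B₀)) :
    (∃ K : Set (ℕ × ℕ), ¬ Tendsto (psiASum a Ψ Kᶜ) atTop (nhds 0) ∧
        ¬ Tendsto (psiASum a Ψ K) atTop (nhds 0)) ∧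
      ∀ U : Ultrafilter (ℕ × ℕ), ∃ K ∈ U, ¬ Tendsto (psiASum a Ψ Kᶜ) atTop (nhds 0) := by
  have hEven := not_tendsto_psiASum_setOf_fst a Ψ hB₀.ne' hA2 Nat.frequently_even
  have hOdd := not_tendsto_psiASum_setOf_fst a Ψ hB₀.ne' hA2 (p := fun i => ¬ Even i)
    (by simpa only [Nat.not_even_iff_odd] using Nat.frequently_odd)
  refine ⟨⟨{x | Even x.1}, hOdd, hEven⟩, fun U => ?_⟩
  rcases U.mem_or_compl_mem {x : ℕ × ℕ | Even x.1} with hK | hKc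
  · exact ⟨_, hK, hOdd⟩
  · exact ⟨_, hKc, by rwa [compl_compl]⟩

/-- For any summability matrix, there is a set `K` with neither `K` nor its complement
in `F_A^Ψ`; hence every ultrafilter on ℕ² contains a set not in `F_A^Ψ`, so `F_A^Ψ` is
never an ultrafilter. -/
theorem psiA_filter_not_ultrafilter (a : ℕ → ℕ → ℝ) (Ψ : ℕ × ℕ → ℝ)
    (hpos : ∀ i j, 0 ≤ a i j)
    (hsum : ∀ i, Summable (fun j : ℕ => if 0 ≤ Ψ (i, j) then a i j else 0))
    (hA1 : ∀ i, (∑' j : ℕ, if 0 ≤ Ψ (i, j) then a i j else 0) ≤ 1)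
    (B₀ : ℝ) (hB₀ : 0 < B₀)
    (hA2 : Tendsto (fun i => ∑' j : ℕ, if 0 ≤ Ψ (i, j) then a i j else 0) atTop (nhds B₀))
    (hA3 : ∀ j, Tendsto (fun i => a i j) atTop (nhds 0)) :
    (∃ K : Set (ℕ × ℕ), ¬ Tendsto (psiASum a Ψ Kᶜ) atTop (nhds 0) ∧
        ¬ Tendsto (psiASum a Ψ K) atTop (nhds 0)) ∧
      ∀ U : Ultrafilter (ℕ × ℕ), ∃ K ∈ U, ¬ Tendsto (psiASum a Ψ Kᶜ) atTop (nhds 0) :=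
  psiA_filter_not_ultrafilter_general a Ψ B₀ hB₀ hA2
end
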